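/- arXiv:2504.21785 — 3 statements merged into one kernel-verified Lean document; each statement's English description precedes it below -/
import Mathlib

section
/- Let c^{(1)},…,c^{(n)} be the coefficients of the least squares approximation of G(·;Q,P,ε) in the span of G(·;Q^{(k)},P^{(k)},ε), and let c̃^{(1)},…,c̃^{(n)} be those of G(·;Q−a,P−b,ε) in the span of G(·;Q^{(k)}−a,P^{(k)}−b,ε), where a,b ∈ ℝ^d. Then c^{(k)} = c̃^{(k)} · exp((i/ε)(Q − Q^{(k)})·b) for each k, provided the Gram matrix is invertible. -/
open MeasureTheory Real

noncomputable def G (d : ℕ) (ε : ℝ) (Q P : EuclideanSpace ℝ (Fin d))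
    (x : EuclideanSpace ℝ (Fin d)) : ℂ :=
  Complex.exp (Complex.I / (ε : ℂ) * ((inner ℝ P (x - Q) : ℝ) : ℂ)
    - ((1 / (2 * ε) : ℝ) : ℂ) * ((‖x - Q‖ : ℝ) : ℂ) ^ 2)

/-!
Translating the centre of every Gaussian by `-a` and its momentum by `-b` multiplies
`G(·; Q, P)` (after the change of variables `x ↦ x + a`) by the plane wave `exp((i/ε) b·(Q - x))`.
In an inner product `⟨G(Q₁,P₁), G(Q₂,P₂)⟩` the `x`-dependence of the two plane waves cancels,
leaving `exp((i/ε) b·(Q₁ - Q₂))`. Hence the shifted Gram matrix and right-hand side are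
`Ã = D A E` and `f̃ = D f` with diagonal unitary `D = diag(exp((i/ε) b·(Q⁽ʲ⁾ - Q)))`,
`E = diag(exp((i/ε) b·(Q - Q⁽ᵏ⁾)))`, and invertibility of `A` forces `c = E c̃`.
-/

namespace Matrix

variable {ι R : Type*} [Fintype ι] [DecidableEq ι] [CommRing R]

theorem eq_mul_of_mulVec_eq_of_rescaled {A At : Matrix ι ι R} {f ft c ct u v : ι → R}
    (hA : IsUnit A) (hu : ∀ j, IsUnit (u j))
    (hAt : ∀ j k, At j k = u j * A j k * v k) (hft : ∀ j, ft j = u j * f j)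
    (hc : A *ᵥ c = f) (hct : At *ᵥ ct = ft) (k : ι) :
    c k = v k * ct k := by
  have hrescaled : A *ᵥ (v * ct) = f := by
    funext j
    refine (hu j).mul_left_cancel ?_
    rw [← hft, ← hct]
    simp only [mulVec, dotProduct, Pi.mul_apply, hAt, Finset.mul_sum]
    exact Finset.sum_congr rfl fun _ _ => by ring
  exact congrFun (mulVec_injective_of_isUnit hA (hc.trans hrescaled.symm)) k

end Matrix

section PlaneWave

variable {E : Type*} [NormedAddCommGroup E] [InnerProductSpace ℝ E]

noncomputable def planeWave (ε : ℝ) (b u : E) : ℂ :=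
  Complex.exp (Complex.I / (ε : ℂ) * ((inner ℝ u b : ℝ) : ℂ))

theorem planeWave_add (ε : ℝ) (b u v : E) :
    planeWave ε b (u + v) = planeWave ε b u * planeWave ε b v := by
  simp only [planeWave, inner_add_left, Complex.ofReal_add, mul_add, Complex.exp_add]

theorem planeWave_neg (ε : ℝ) (b u : E) :
    planeWave ε b (-u) = (starRingEnd ℂ) (planeWave ε b u) := by
  simp only [planeWave, ← Complex.exp_conj, inner_neg_left, map_mul, map_div₀, Complex.conj_I,
    Complex.conj_ofReal, Complex.ofReal_neg]
  ring_nf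

theorem planeWave_ne_zero (ε : ℝ) (b u : E) : planeWave ε b u ≠ 0 :=
  Complex.exp_ne_zero _

end PlaneWave

theorem G_sub_sub (d : ℕ) (ε : ℝ) (Q P a b x : EuclideanSpace ℝ (Fin d)) :
    G d ε (Q - a) (P - b) x = G d ε Q P (x + a) * planeWave ε b (Q - (x + a)) := by
  have hx : x - (Q - a) = x + a - Q := by abel
  rw [G, G, planeWave, hx, ← Complex.exp_add, ← neg_sub (x + a) Q, inner_neg_left,
    inner_sub_left, real_inner_comm b]
  push_cast
  ring_nf

theorem integral_G_sub_sub_mul_conj (d : ℕ) (ε : ℝ) (a b Q₁ P₁ Q₂ P₂ : EuclideanSpace ℝ (Fin d)) :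
    ∫ x, G d ε (Q₁ - a) (P₁ - b) x * (starRingEnd ℂ) (G d ε (Q₂ - a) (P₂ - b) x) =
      (∫ x, G d ε Q₁ P₁ x * (starRingEnd ℂ) (G d ε Q₂ P₂ x)) * planeWave ε b (Q₁ - Q₂) := by
  have hpointwise : ∀ x,
      G d ε (Q₁ - a) (P₁ - b) x * (starRingEnd ℂ) (G d ε (Q₂ - a) (P₂ - b) x) =
      G d ε Q₁ P₁ (x + a) * (starRingEnd ℂ) (G d ε Q₂ P₂ (x + a)) * planeWave ε b (Q₁ - Q₂) := by
    intro x
    have hphase : Q₁ - Q₂ = (Q₁ - (x + a)) + -(Q₂ - (x + a)) := by abel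
    rw [G_sub_sub, G_sub_sub, hphase, planeWave_add, planeWave_neg, map_mul]
    ring
  simp_rw [hpointwise]
  rw [integral_mul_const,
    integral_add_right_eq_self (fun x => G d ε Q₁ P₁ x * (starRingEnd ℂ) (G d ε Q₂ P₂ x)) a]

theorem lsa_coefficients_shift_general (d : ℕ) (ε : ℝ)
    (n : ℕ) (Q P a b : EuclideanSpace ℝ (Fin d))
    (Qk Pk : Fin n → EuclideanSpace ℝ (Fin d))
    (A At : Matrix (Fin n) (Fin n) ℂ) (f ft : Fin n → ℂ) (c ct : Fin n → ℂ)
    (hA : ∀ j k, A j k = ∫ x, G d ε (Qk j) (Pk j) x * (starRingEnd ℂ) (G d ε (Qk k) (Pk k) x))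
    (hAt : ∀ j k, At j k =
      ∫ x, G d ε (Qk j - a) (Pk j - b) x * (starRingEnd ℂ) (G d ε (Qk k - a) (Pk k - b) x))
    (hf : ∀ j, f j = ∫ x, G d ε (Qk j) (Pk j) x * (starRingEnd ℂ) (G d ε Q P x))
    (hft : ∀ j, ft j =
      ∫ x, G d ε (Qk j - a) (Pk j - b) x * (starRingEnd ℂ) (G d ε (Q - a) (P - b) x))
    (hAinv : IsUnit A) (hc : A.mulVec c = f) (hct : At.mulVec ct = ft) :
    ∀ k, c k = ct k *
      Complex.exp (Complex.I / (ε : ℂ) * ((inner ℝ (Q - Qk k) b : ℝ) : ℂ)) := by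
  have hAt' : ∀ j k, At j k =
      planeWave ε b (Qk j - Q) * A j k * planeWave ε b (Q - Qk k) := by
    intro j k
    rw [hAt, integral_G_sub_sub_mul_conj, ← hA, ← sub_add_sub_cancel (Qk j) Q (Qk k),
      planeWave_add]
    ring
  have hft' : ∀ j, ft j = planeWave ε b (Qk j - Q) * f j := by
    intro j
    rw [hft, integral_G_sub_sub_mul_conj, ← hf, mul_comm]
  intro k
  rw [Matrix.eq_mul_of_mulVec_eq_of_rescaled hAinv
    (fun j => (planeWave_ne_zero ε b _).isUnit) hAt' hft' hc hct k, mul_comm]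
  rfl

theorem lsa_coefficients_shift (d : ℕ) (hd : 1 ≤ d) (ε : ℝ) (hε : 0 < ε)
    (n : ℕ) (hn : 1 ≤ n) (Q P a b : EuclideanSpace ℝ (Fin d))
    (Qk Pk : Fin n → EuclideanSpace ℝ (Fin d))
    (hdist : Function.Injective (fun k => (Qk k, Pk k)))
    (A At : Matrix (Fin n) (Fin n) ℂ) (f ft : Fin n → ℂ) (c ct : Fin n → ℂ)
    (hA : ∀ j k, A j k = ∫ x, G d ε (Qk j) (Pk j) x * (starRingEnd ℂ) (G d ε (Qk k) (Pk k) x))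
    (hAt : ∀ j k, At j k =
      ∫ x, G d ε (Qk j - a) (Pk j - b) x * (starRingEnd ℂ) (G d ε (Qk k - a) (Pk k - b) x))
    (hf : ∀ j, f j = ∫ x, G d ε (Qk j) (Pk j) x * (starRingEnd ℂ) (G d ε Q P x))
    (hft : ∀ j, ft j =
      ∫ x, G d ε (Qk j - a) (Pk j - b) x * (starRingEnd ℂ) (G d ε (Q - a) (P - b) x))
    (hAinv : IsUnit A) (hc : A.mulVec c = f) (hct : At.mulVec ct = ft) :
    ∀ k, c k = ct k *
      Complex.exp (Complex.I / (ε : ℂ) * ((inner ℝ (Q - Qk k) b : ℝ) : ℂ)) :=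
  lsa_coefficients_shift_general d ε n Q P a b Qk Pk A At f ft c ct hA hAt hf hft hAinv hc hct
end

section
/- The relative L² least-squares error is scale invariant in ε: for ε₁, ε₂ > 0, constants C_q, C_p > 0, s, t ∈ [0,1]^d and shift vectors δq^{(k)}, δp^{(k)} ∈ ℤ^d, the relative error of approximating G(·; C_q√ε₁ s, C_p√ε₁ t, ε₁) by the span of G(·; C_q√ε₁ δq^{(k)}, C_p√ε₁ δp^{(k)}, ε₁), k=1,…,n, equals the relative error of approximating G(·; C_q√ε₂ s, C_p√ε₂ t, ε₂) by the span of G(·; C_q√ε₂ δq^{(k)}, C_p√ε₂ δp^{(k)}, ε₂). -/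
open MeasureTheory Real

/-! A wave packet at scale `ε` centred at `(√ε Q, √ε P)` is the one at scale `1` centred at
`(Q, P)`, composed with the dilation `x ↦ x / √ε`. A dilation of `ℝ^d` by `a` multiplies
squared `L²` norms by `a^d`, uniformly over all linear combinations, so the least-squares error
scales by `ε^(d/4)`; this is exactly the factor `(π ε)^(d/4) / π^(d/4)` of the normalisation. -/

section LeastSquares

variable {E ι : Type*} [NormedAddCommGroup E] [NormedSpace ℝ E] [MeasurableSpace E]
  [BorelSpace E] [FiniteDimensional ℝ E] [Fintype ι]

noncomputable def leastSquaresError (μ : Measure E) (f : E → ℂ) (g : ι → E → ℂ) : ℝ :=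
  ⨅ c : ι → ℂ, √(∫ x, ‖f x - ∑ k, c k * g k x‖ ^ 2 ∂μ)

theorem leastSquaresError_comp_inv_smul (μ : Measure E) [μ.IsAddHaarMeasure] (f : E → ℂ)
    (g : ι → E → ℂ) {a : ℝ} (ha : 0 ≤ a) :
    leastSquaresError μ (fun x => f (a⁻¹ • x)) (fun k x => g k (a⁻¹ • x))
      = √(a ^ Module.finrank ℝ E) * leastSquaresError μ f g := by
  rw [leastSquaresError, leastSquaresError, Real.mul_iInf_of_nonneg (sqrt_nonneg _)]
  refine iInf_congr fun c => ?_
  rw [Measure.integral_comp_inv_smul_of_nonneg μ (fun x => ‖f x - ∑ k, c k * g k x‖ ^ 2) ha,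
    smul_eq_mul, sqrt_mul (by positivity)]

end LeastSquares

theorem G_smul (d : ℕ) (ε : ℝ) {a : ℝ} (ha : a ≠ 0) (Q P x : EuclideanSpace ℝ (Fin d)) :
    G d (a ^ 2 * ε) (a • Q) (a • P) x = G d ε Q P (a⁻¹ • x) := by
  have hx : x - a • Q = a • (a⁻¹ • x - Q) := by
    rw [smul_sub, smul_inv_smul₀ ha]
  have hinner : inner ℝ (a • P) (x - a • Q) = a ^ 2 * inner ℝ P (a⁻¹ • x - Q) := by
    rw [hx, real_inner_smul_left, real_inner_smul_right]; ring
  have hnorm : ‖x - a • Q‖ ^ 2 = a ^ 2 * ‖a⁻¹ • x - Q‖ ^ 2 := by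
    rw [hx, norm_smul, mul_pow, Real.norm_eq_abs, sq_abs]
  unfold G
  rw [← Complex.ofReal_pow, ← Complex.ofReal_pow, hinner, hnorm]
  by_cases hε : ε = 0
  · simp [hε]
  have ha' : (a : ℂ) ≠ 0 := by exact_mod_cast ha
  congr 1
  push_cast
  field_simp

theorem leastSquaresError_G_sqrt_smul {d n : ℕ} {ε : ℝ} (hε : 0 < ε) (Q P : EuclideanSpace ℝ (Fin d))
    (Qs Ps : Fin n → EuclideanSpace ℝ (Fin d)) :
    leastSquaresError volume (G d ε (√ε • Q) (√ε • P)) (fun k => G d ε (√ε • Qs k) (√ε • Ps k))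
      = ε ^ ((d : ℝ) / 4) * leastSquaresError volume (G d 1 Q P) (fun k => G d 1 (Qs k) (Ps k)) := by
  have hG : ∀ Q P, G d ε (√ε • Q) (√ε • P) = fun x => G d 1 Q P ((√ε)⁻¹ • x) := by
    intro Q P
    ext x
    simpa [sq_sqrt hε.le] using G_smul d 1 (sqrt_ne_zero'.2 hε) Q P x
  simp_rw [hG]
  rw [leastSquaresError_comp_inv_smul volume _ _ (sqrt_nonneg ε), finrank_euclideanSpace_fin,
    sqrt_eq_rpow, sqrt_eq_rpow, ← rpow_natCast, ← rpow_mul hε.le, ← rpow_mul hε.le]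
  ring_nf

theorem lsa_relative_error_eps_invariant_general (d : ℕ) (n : ℕ)
    (ε₁ ε₂ : ℝ) (hε₁ : 0 < ε₁) (hε₂ : 0 < ε₂) (Cq Cp : ℝ)
    (s t : EuclideanSpace ℝ (Fin d))
    (δq δp : Fin n → EuclideanSpace ℝ (Fin d)) :
    (⨅ c : Fin n → ℂ, Real.sqrt (∫ x,
        ‖G d ε₁ ((Cq * Real.sqrt ε₁) • s) ((Cp * Real.sqrt ε₁) • t) x
          - ∑ k, c k * G d ε₁ ((Cq * Real.sqrt ε₁) • δq k) ((Cp * Real.sqrt ε₁) • δp k) x‖ ^ 2)) /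
        (π * ε₁) ^ ((d : ℝ) / 4)
      = (⨅ c : Fin n → ℂ, Real.sqrt (∫ x,
          ‖G d ε₂ ((Cq * Real.sqrt ε₂) • s) ((Cp * Real.sqrt ε₂) • t) x
            - ∑ k, c k * G d ε₂ ((Cq * Real.sqrt ε₂) • δq k) ((Cp * Real.sqrt ε₂) • δp k) x‖ ^ 2)) /
        (π * ε₂) ^ ((d : ℝ) / 4) := by
  have key : ∀ ε, 0 < ε →
      leastSquaresError volume (G d ε ((Cq * √ε) • s) ((Cp * √ε) • t))
          (fun k => G d ε ((Cq * √ε) • δq k) ((Cp * √ε) • δp k)) / (π * ε) ^ ((d : ℝ) / 4)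
        = leastSquaresError volume (G d 1 (Cq • s) (Cp • t))
          (fun k => G d 1 (Cq • δq k) (Cp • δp k)) / π ^ ((d : ℝ) / 4) := by
    intro ε hε
    simp_rw [mul_comm _ √ε, ← smul_smul]
    rw [leastSquaresError_G_sqrt_smul hε, mul_rpow pi_pos.le hε.le, mul_comm (π ^ _),
      mul_div_mul_left _ _ (by positivity)]
  exact (key ε₁ hε₁).trans (key ε₂ hε₂).symm

theorem lsa_relative_error_eps_invariant (d : ℕ) (hd : 1 ≤ d) (n : ℕ) (hn : 1 ≤ n)
    (ε₁ ε₂ : ℝ) (hε₁ : 0 < ε₁) (hε₂ : 0 < ε₂) (Cq Cp : ℝ) (hCq : 0 < Cq) (hCp : 0 < Cp)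
    (s t : EuclideanSpace ℝ (Fin d))
    (hs : ∀ i, s i ∈ Set.Icc (0 : ℝ) 1) (ht : ∀ i, t i ∈ Set.Icc (0 : ℝ) 1)
    (δq δp : Fin n → EuclideanSpace ℝ (Fin d))
    (hδq : ∀ k i, ∃ z : ℤ, δq k i = (z : ℝ)) (hδp : ∀ k i, ∃ z : ℤ, δp k i = (z : ℝ)) :
    (⨅ c : Fin n → ℂ, Real.sqrt (∫ x,
        ‖G d ε₁ ((Cq * Real.sqrt ε₁) • s) ((Cp * Real.sqrt ε₁) • t) x
          - ∑ k, c k * G d ε₁ ((Cq * Real.sqrt ε₁) • δq k) ((Cp * Real.sqrt ε₁) • δp k) x‖ ^ 2)) /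
        (π * ε₁) ^ ((d : ℝ) / 4)
      = (⨅ c : Fin n → ℂ, Real.sqrt (∫ x,
          ‖G d ε₂ ((Cq * Real.sqrt ε₂) • s) ((Cp * Real.sqrt ε₂) • t) x
            - ∑ k, c k * G d ε₂ ((Cq * Real.sqrt ε₂) • δq k) ((Cp * Real.sqrt ε₂) • δp k) x‖ ^ 2)) /
        (π * ε₂) ^ ((d : ℝ) / 4) :=
  lsa_relative_error_eps_invariant_general d n ε₁ ε₂ hε₁ hε₂ Cq Cp s t δq δp
end

section
/- The Gram matrix entry of on-grid Gaussian neighbors is independent of ε under the mesh scaling Δq = C_q√ε, Δp = C_p√ε: ⟨G(·; Δq δq^{(j)}, Δp δp^{(j)}, ε), G(·; Δq δq^{(k)}, Δp δp^{(k)}, ε)⟩ / (πε)^{d/2} = exp( −(C_q²/4)|δq^{(j)}−δq^{(k)}|² − (C_p²/4)|δp^{(j)}−δp^{(k)}|² + (i C_q C_p/2)(δq^{(k)}−δq^{(j)})·(δp^{(j)}+δp^{(k)}) ), a quantity not depending on ε. -/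
open MeasureTheory Real

/-!
Multiplying `G(·; Q₁, P₁)` by the conjugate of `G(·; Q₂, P₂)` and completing the square
around the midpoint of `Q₁` and `Q₂` leaves a Gaussian of width `ε` with a linear phase in
`P₁ - P₂`, whose integral is the Gaussian Fourier transform. The overlap is therefore
`(πε)^{d/2} exp(-(|Q₁ - Q₂|² + |P₁ - P₂|²)/(4ε) + i⟨P₁ + P₂, Q₂ - Q₁⟩/(2ε))` for arbitrary
centres. On the grid `Q = C_q √ε δq`, `P = C_p √ε δp` every quadratic quantity in the
exponent carries a factor `ε`, which cancels the `1/ε`.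
-/

section

open Complex

theorem G_mul_conj_G (d : ℕ) (ε : ℝ) (Q₁ Q₂ P₁ P₂ x : EuclideanSpace ℝ (Fin d)) :
    G d ε Q₁ P₁ x * starRingEnd ℂ (G d ε Q₂ P₂ x)
      = exp (((-(‖Q₁ - Q₂‖ ^ 2 / (4 * ε)) : ℝ) : ℂ)
          + I * ((inner ℝ (P₁ + P₂) (Q₂ - Q₁) / (2 * ε) : ℝ) : ℂ))
        * exp (-((ε⁻¹ : ℝ) : ℂ) * ((‖x - (2⁻¹ : ℝ) • (Q₁ + Q₂)‖ : ℝ) : ℂ) ^ 2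
          + I * ((ε⁻¹ : ℝ) : ℂ)
            * ((inner ℝ (P₁ - P₂) (x - (2⁻¹ : ℝ) • (Q₁ + Q₂)) : ℝ) : ℂ)) := by
  set m := (2⁻¹ : ℝ) • (Q₁ + Q₂)
  set a := (2⁻¹ : ℝ) • (Q₁ - Q₂)
  have h₁ : x - Q₁ = (x - m) - a := by module
  have h₂ : x - Q₂ = (x - m) + a := by module
  have hnorm : ‖x - Q₁‖ ^ 2 + ‖x - Q₂‖ ^ 2 = 2 * ‖x - m‖ ^ 2 + ‖Q₁ - Q₂‖ ^ 2 / 2 := by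
    have ha : ‖Q₁ - Q₂‖ = 2 * ‖a‖ := by
      rw [show Q₁ - Q₂ = (2 : ℝ) • a by module, norm_smul, Real.norm_two]
    rw [h₁, h₂, ha, norm_sub_sq_real, norm_add_sq_real]; ring
  have hinner : inner ℝ P₁ (x - Q₁) - inner ℝ P₂ (x - Q₂)
      = inner ℝ (P₁ - P₂) (x - m) + inner ℝ (P₁ + P₂) (Q₂ - Q₁) / 2 := by
    rw [h₁, h₂, show Q₂ - Q₁ = (-2 : ℝ) • a by module, real_inner_smul_right]
    simp only [inner_sub_left, inner_sub_right, inner_add_left, inner_add_right]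
    ring
  rw [G, G, ← exp_conj, ← Complex.exp_add, ← Complex.exp_add]
  congr 1
  have hnormC := congrArg (fun r : ℝ => (r : ℂ)) hnorm
  have hinnerC := congrArg (fun r : ℝ => (r : ℂ)) hinner
  push_cast at hnormC hinnerC ⊢
  simp only [map_sub, map_mul, map_div₀, map_one, map_ofNat, conj_I, conj_ofReal, map_pow]
  linear_combination (I * (ε : ℂ)⁻¹) * hinnerC - (1 / (2 * (ε : ℂ))) * hnormC

theorem pi_div_inv_cpow_finrank_div_two (d : ℕ) {ε : ℝ} (hε : 0 < ε) :
    ((π : ℂ) / ((ε⁻¹ : ℝ) : ℂ)) ^ ((Module.finrank ℝ (EuclideanSpace ℝ (Fin d)) : ℂ) / 2)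
      = (((π * ε) ^ ((d : ℝ) / 2) : ℝ) : ℂ) := by
  rw [finrank_euclideanSpace_fin, Complex.ofReal_cpow (by positivity)]
  push_cast
  rw [div_inv_eq_mul]

theorem integral_G_mul_conj_G (d : ℕ) {ε : ℝ} (hε : 0 < ε)
    (Q₁ Q₂ P₁ P₂ : EuclideanSpace ℝ (Fin d)) :
    ∫ x, G d ε Q₁ P₁ x * starRingEnd ℂ (G d ε Q₂ P₂ x)
      = (((π * ε) ^ ((d : ℝ) / 2) : ℝ) : ℂ)
        * exp (((-(‖Q₁ - Q₂‖ ^ 2 + ‖P₁ - P₂‖ ^ 2) / (4 * ε)) : ℝ)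
          + I * ((inner ℝ (P₁ + P₂) (Q₂ - Q₁) / (2 * ε) : ℝ))) := by
  have hb : 0 < ((ε⁻¹ : ℝ) : ℂ).re := by simpa using hε
  simp_rw [G_mul_conj_G]
  rw [integral_const_mul,
    integral_sub_right_eq_self (fun v => exp (-((ε⁻¹ : ℝ) : ℂ) * ((‖v‖ : ℝ) : ℂ) ^ 2
      + I * ((ε⁻¹ : ℝ) : ℂ) * ((inner ℝ (P₁ - P₂) v : ℝ) : ℂ))),
    GaussianFourier.integral_cexp_neg_mul_sq_norm_add hb, pi_div_inv_cpow_finrank_div_two d hε,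
    mul_left_comm, ← Complex.exp_add]
  have hε' : (ε : ℂ) ≠ 0 := by exact_mod_cast hε.ne'
  congr 2
  push_cast
  field_simp
  linear_combination 2 * (‖P₁ - P₂‖ : ℂ) ^ 2 * I_sq

end

theorem gram_entry_eps_independent_general (d : ℕ) (ε : ℝ) (hε : 0 < ε)
    (Cq Cp : ℝ) (Δq Δp : ℝ)
    (hΔq : Δq = Cq * Real.sqrt ε) (hΔp : Δp = Cp * Real.sqrt ε)
    (δqj δqk δpj δpk : EuclideanSpace ℝ (Fin d)) :
    (∫ x, G d ε (Δq • δqj) (Δp • δpj) x * (starRingEnd ℂ) (G d ε (Δq • δqk) (Δp • δpk) x)) /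
        (((π * ε) ^ ((d : ℝ) / 2) : ℝ) : ℂ)
      = Complex.exp (((-(Cq ^ 2 / 4) * ‖δqj - δqk‖ ^ 2
            - Cp ^ 2 / 4 * ‖δpj - δpk‖ ^ 2 : ℝ) : ℂ)
          + Complex.I * ((Cq * Cp / 2 * (inner ℝ (δqk - δqj) (δpj + δpk) : ℝ) : ℝ) : ℂ)) := by
  have hnorm (C : ℝ) (u v : EuclideanSpace ℝ (Fin d)) :
      ‖(C * √ε) • u - (C * √ε) • v‖ ^ 2 = C ^ 2 * ε * ‖u - v‖ ^ 2 := by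
    rw [← smul_sub, norm_smul, mul_pow, Real.norm_eq_abs, sq_abs, mul_pow,
      Real.sq_sqrt hε.le]
  have hreal : -(‖Δq • δqj - Δq • δqk‖ ^ 2 + ‖Δp • δpj - Δp • δpk‖ ^ 2) / (4 * ε)
      = -(Cq ^ 2 / 4) * ‖δqj - δqk‖ ^ 2 - Cp ^ 2 / 4 * ‖δpj - δpk‖ ^ 2 := by
    rw [hΔq, hΔp, hnorm, hnorm]
    field_simp
    ring
  have himag : inner ℝ (Δp • δpj + Δp • δpk) (Δq • δqk - Δq • δqj) / (2 * ε)
      = Cq * Cp / 2 * inner ℝ (δqk - δqj) (δpj + δpk) := by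
    rw [← smul_add, ← smul_sub, real_inner_smul_left, real_inner_smul_right, real_inner_comm,
      hΔq, hΔp]
    field_simp
    linear_combination Cq * Cp * inner ℝ (δqk - δqj) (δpj + δpk) * Real.mul_self_sqrt hε.le
  have hvol : (((π * ε) ^ ((d : ℝ) / 2) : ℝ) : ℂ) ≠ 0 := by
    exact_mod_cast (Real.rpow_pos_of_pos (by positivity) _).ne'
  rw [integral_G_mul_conj_G d hε, hreal, himag, mul_div_cancel_left₀ _ hvol]

theorem gram_entry_eps_independent (d : ℕ) (hd : 1 ≤ d) (ε : ℝ) (hε : 0 < ε)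
    (Cq Cp : ℝ) (hCq : 0 < Cq) (hCp : 0 < Cp) (Δq Δp : ℝ)
    (hΔq : Δq = Cq * Real.sqrt ε) (hΔp : Δp = Cp * Real.sqrt ε)
    (δqj δqk δpj δpk : EuclideanSpace ℝ (Fin d))
    (hδqj : ∀ i, ∃ z : ℤ, δqj i = (z : ℝ)) (hδqk : ∀ i, ∃ z : ℤ, δqk i = (z : ℝ))
    (hδpj : ∀ i, ∃ z : ℤ, δpj i = (z : ℝ)) (hδpk : ∀ i, ∃ z : ℤ, δpk i = (z : ℝ)) :
    (∫ x, G d ε (Δq • δqj) (Δp • δpj) x * (starRingEnd ℂ) (G d ε (Δq • δqk) (Δp • δpk) x)) /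
        (((π * ε) ^ ((d : ℝ) / 2) : ℝ) : ℂ)
      = Complex.exp (((-(Cq ^ 2 / 4) * ‖δqj - δqk‖ ^ 2
            - Cp ^ 2 / 4 * ‖δpj - δpk‖ ^ 2 : ℝ) : ℂ)
          + Complex.I * ((Cq * Cp / 2 * (inner ℝ (δqk - δqj) (δpj + δpk) : ℝ) : ℝ) : ℂ)) :=
  gram_entry_eps_independent_general d ε hε Cq Cp Δq Δp hΔq hΔp δqj δqk δpj δpk
end
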